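/- Let D ∈ M_{k×l}(ℝ) be a regular matrix with no zero rows and no zero columns (so every row of D contains exactly one 1 and exactly one −1). Let C₁,…,C_r be the connected components of the column graph of D and let mᵢ denote the largest column index in Cᵢ. Define U ∈ M_{l×l}(ℝ) by U(j,j) = 1 for all j, U(j,mᵢ) = 1 for all j ∈ Cᵢ and each 1 ≤ i ≤ r, and all other entries 0 (so U is upper triangular with 1's on the diagonal). Then the j-th column of D·U is the zero vector if and only if j ∈ {m₁,…,m_r}, and the non-zero columns of D·U are linearly independent. -/

import Mathlib

/-
Column `j` of `U` is `eⱼ` unless `j` is the largest index of its component, in which case it is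
the indicator of that component. So `D * U` keeps the non-maximal columns of `D` and replaces
each maximal one by the sum of `D`'s columns over its component, which is zero because the
`1` and the `-1` of every row lie in one component. More generally, the kernel of `D` consists
of the vectors constant on components; a relation among the non-maximal columns is such a
vector vanishing at every maximum, hence zero.
-/

open scoped Classical

/-- The `j`-th column of a matrix, as a vector. -/
def col {k l : ℕ} (M : Matrix (Fin k) (Fin l) ℝ) (j : Fin l) : Fin k → ℝ :=
  fun i => M i j

/-- The *column graph* of a matrix `D`: the simple graph on the column indices in which
two distinct columns are adjacent iff some row has a non-zero entry in both columns. -/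
def columnGraph {k l : ℕ} (D : Matrix (Fin k) (Fin l) ℝ) : SimpleGraph (Fin l) where
  Adj j₁ j₂ := j₁ ≠ j₂ ∧ ∃ i : Fin k, D i j₁ ≠ 0 ∧ D i j₂ ≠ 0
  symm := by
    constructor
    intro a b h
    exact ⟨h.1.symm, h.2.imp fun i hi => ⟨hi.2, hi.1⟩⟩
  loopless := by
    constructor
    intro a h
    exact h.1 rfl

open scoped Matrix

/-- A regular matrix without zero rows: every row is `eⱼ₁ - eⱼ₂` for two distinct columns. -/
def IsOrientedIncidence {k l : ℕ} (D : Matrix (Fin k) (Fin l) ℝ) : Prop :=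
  ∀ i : Fin k, ∃ j₁ j₂ : Fin l, j₁ ≠ j₂ ∧ D i j₁ = 1 ∧ D i j₂ = -1 ∧
    ∀ j : Fin l, j ≠ j₁ → j ≠ j₂ → D i j = 0

/-- `j` is the largest index of its connected component (one of the paper's `mᵢ`). -/
def IsComponentMax {V : Type*} [LE V] (G : SimpleGraph V) (j : V) : Prop :=
  ∀ j', G.Reachable j j' → j' ≤ j

theorem exists_reachable_isComponentMax {V : Type*} [Fintype V] [LinearOrder V]
    (G : SimpleGraph V) (j : V) : ∃ m, G.Reachable j m ∧ IsComponentMax G m := by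
  obtain ⟨m, hm, hmax⟩ :=
    (Finset.univ.filter (G.Reachable j)).exists_max_image id ⟨j, by simp⟩
  rw [Finset.mem_filter] at hm
  exact ⟨m, hm.2, fun j' hj' => hmax j' (by simpa using hm.2.trans hj')⟩

theorem col_mul_eq_mulVec {k l : ℕ} (D : Matrix (Fin k) (Fin l) ℝ) (U : Matrix (Fin l) (Fin l) ℝ)
    (j : Fin l) : col (D * U) j = D *ᵥ U.col j :=
  rfl

section ComponentMaxMatrix

variable {n : ℕ} {R : Type*} [Zero R] [One R] {G : SimpleGraph (Fin n)}
  {U : Matrix (Fin n) (Fin n) R} {j : Fin n}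

theorem col_eq_indicator_of_isComponentMax
    (hU : ∀ j j' : Fin n, U j j' =
      if j = j' ∨ (G.Reachable j j' ∧ ∀ j'', G.Reachable j j'' → j'' ≤ j') then 1 else 0)
    (hj : IsComponentMax G j) : U.col j = fun j' => if G.Reachable j' j then 1 else 0 := by
  funext j'
  rw [Matrix.col_apply, hU]
  by_cases hr : G.Reachable j' j
  · rw [if_pos hr, if_pos (Or.inr ⟨hr, fun j'' h => hj j'' (hr.symm.trans h)⟩)]
  · rw [if_neg hr, if_neg]
    rintro (rfl | ⟨hr', -⟩)
    exacts [hr .rfl, hr hr']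

theorem col_eq_single_of_not_isComponentMax
    (hU : ∀ j j' : Fin n, U j j' =
      if j = j' ∨ (G.Reachable j j' ∧ ∀ j'', G.Reachable j j'' → j'' ≤ j') then 1 else 0)
    (hj : ¬IsComponentMax G j) : U.col j = Pi.single j 1 := by
  funext j'
  rw [Matrix.col_apply, hU, Pi.single_apply]
  refine if_congr ⟨?_, Or.inl⟩ rfl rfl
  rintro (h | ⟨hr, hmax⟩)
  · exact h
  · exact absurd (fun j'' h => hmax j'' (hr.trans h)) hj

end ComponentMaxMatrix

section OrientedIncidence

variable {k l : ℕ} {D : Matrix (Fin k) (Fin l) ℝ}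

theorem mulVec_apply_of_row {i : Fin k} {j₁ j₂ : Fin l} (hne : j₁ ≠ j₂) (h₁ : D i j₁ = 1)
    (h₂ : D i j₂ = -1) (h₀ : ∀ j, j ≠ j₁ → j ≠ j₂ → D i j = 0) (v : Fin l → ℝ) :
    (D *ᵥ v) i = v j₁ - v j₂ := by
  rw [Matrix.mulVec, dotProduct, Fintype.sum_eq_add j₁ j₂ hne
    (fun j hj => by rw [h₀ j hj.1 hj.2, zero_mul]), h₁, h₂]
  ring

theorem IsOrientedIncidence.apply_eq_of_adj (hD : IsOrientedIncidence D) {c : Fin l → ℝ}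
    (hc : D *ᵥ c = 0) {j j' : Fin l} (hadj : (columnGraph D).Adj j j') : c j = c j' := by
  obtain ⟨-, i, hj, hj'⟩ := hadj
  obtain ⟨j₁, j₂, hne, h₁, h₂, h₀⟩ := hD i
  have hrow : c j₁ = c j₂ := by
    have := congrFun hc i
    rw [mulVec_apply_of_row hne h₁ h₂ h₀] at this
    exact sub_eq_zero.mp this
  have hsupp : ∀ j, D i j ≠ 0 → c j = c j₁ := by
    intro j hj
    by_cases h : j = j₁
    · rw [h]
    · rw [not_imp_comm.mp (h₀ j h) hj, hrow]
  rw [hsupp j hj, hsupp j' hj']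

theorem IsOrientedIncidence.mulVec_eq_zero_iff (hD : IsOrientedIncidence D) (c : Fin l → ℝ) :
    D *ᵥ c = 0 ↔ ∀ j j', (columnGraph D).Reachable j j' → c j = c j' := by
  constructor
  · intro hc j j' h
    rw [SimpleGraph.reachable_iff_reflTransGen] at h
    induction h with
    | refl => rfl
    | tail _ hadj ih => exact ih.trans (hD.apply_eq_of_adj hc hadj)
  · intro hc
    funext i
    obtain ⟨j₁, j₂, hne, h₁, h₂, h₀⟩ := hD i
    have hadj : (columnGraph D).Adj j₁ j₂ := ⟨hne, i, by simp [h₁], by simp [h₂]⟩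
    rw [mulVec_apply_of_row hne h₁ h₂ h₀, hc _ _ hadj.reachable, sub_self, Pi.zero_apply]

theorem IsOrientedIncidence.col_mul_eq_zero (hD : IsOrientedIncidence D)
    {U : Matrix (Fin l) (Fin l) ℝ}
    (hU : ∀ j j' : Fin l, U j j' = if j = j' ∨ ((columnGraph D).Reachable j j' ∧
      ∀ j'', (columnGraph D).Reachable j j'' → j'' ≤ j') then 1 else 0)
    {j : Fin l} (hj : IsComponentMax (columnGraph D) j) : col (D * U) j = 0 := by
  rw [col_mul_eq_mulVec, col_eq_indicator_of_isComponentMax hU hj, hD.mulVec_eq_zero_iff]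
  exact fun a b hab => if_congr ⟨hab.symm.trans, hab.trans⟩ rfl rfl

theorem col_mul_eq_col {U : Matrix (Fin l) (Fin l) ℝ}
    (hU : ∀ j j' : Fin l, U j j' = if j = j' ∨ ((columnGraph D).Reachable j j' ∧
      ∀ j'', (columnGraph D).Reachable j j'' → j'' ≤ j') then 1 else 0)
    {j : Fin l} (hj : ¬IsComponentMax (columnGraph D) j) : col (D * U) j = col D j := by
  rw [col_mul_eq_mulVec, col_eq_single_of_not_isComponentMax hU hj, Matrix.mulVec_single_one]
  rfl

theorem IsOrientedIncidence.linearIndepOn_col (hD : IsOrientedIncidence D) :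
    LinearIndepOn ℝ (col D) {j | ¬IsComponentMax (columnGraph D) j} := by
  rw [linearIndepOn_iff]
  intro c hc hcomb
  have hker : D *ᵥ c = 0 := by
    rw [← hcomb, Finsupp.linearCombination_apply, Finsupp.sum_fintype _ _ (by simp)]
    funext i
    simp [Matrix.mulVec, dotProduct, col, mul_comm]
  ext j
  obtain ⟨m, hjm, hm⟩ := exists_reachable_isComponentMax (columnGraph D) j
  rw [(hD.mulVec_eq_zero_iff c).mp hker j m hjm]
  exact Finsupp.notMem_support_iff.mp fun h => hc h hm

end OrientedIncidence

/-- Let `D` be a regular matrix with no zero rows and no zero columns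
(every row contains exactly one `1`, exactly one `-1`, and zeros elsewhere).  Let `U` be the
upper-triangular matrix with `1`s on the diagonal and `U j m = 1` whenever `m` is the largest
column index of the connected component of `j` in the column graph.  Then the `j`-th column
of `D * U` is zero iff `j` is the largest index of its own component, and the non-zero
columns of `D * U` are linearly independent. -/
theorem stmt4 {k l : ℕ} (D : Matrix (Fin k) (Fin l) ℝ)
    (hrow : ∀ i : Fin k, ∃ j₁ j₂ : Fin l, j₁ ≠ j₂ ∧ D i j₁ = 1 ∧ D i j₂ = -1 ∧
      ∀ j : Fin l, j ≠ j₁ → j ≠ j₂ → D i j = 0)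
    (hcols : ∀ j, col D j ≠ 0)
    (U : Matrix (Fin l) (Fin l) ℝ)
    (hU : ∀ j j' : Fin l, U j j' =
      if j = j' ∨ ((columnGraph D).Reachable j j' ∧
          ∀ j'' : Fin l, (columnGraph D).Reachable j j'' → j'' ≤ j') then 1 else 0) :
    (∀ j : Fin l, col (D * U) j = 0 ↔
      ∀ j' : Fin l, (columnGraph D).Reachable j j' → j' ≤ j) ∧
    LinearIndependent ℝ (fun j : {j : Fin l // col (D * U) j ≠ 0} => col (D * U) j.1) := by
  have hD : IsOrientedIncidence D := hrow
  have hzero : ∀ j, col (D * U) j = 0 ↔ IsComponentMax (columnGraph D) j := fun j =>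
    ⟨fun h => not_not.mp fun hj => hcols j (col_mul_eq_col hU hj ▸ h),
      hD.col_mul_eq_zero hU⟩
  refine ⟨hzero, ?_⟩
  have hset : {j | col (D * U) j ≠ 0} = {j | ¬IsComponentMax (columnGraph D) j} :=
    Set.ext fun j => not_congr (hzero j)
  show LinearIndepOn ℝ (col (D * U)) {j | col (D * U) j ≠ 0}
  rw [hset]
  exact hD.linearIndepOn_col.congr fun j hj => (col_mul_eq_col hU hj).symm
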